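/- arXiv:math/0410007 — 5 statements merged into one kernel-verified Lean document; each statement's English description precedes it below -/
import Mathlib

section
/- Consider a random real-valued step S taking values u+ih, −(u+ih), u+v, −(u+v), v−ih, −(v−ih) with probabilities a, a, b, b, c, c respectively, where u = cos φ sin ψ, v = sin φ cos ψ, h = sin φ sin ψ, and a, b, c are as defined via λ. Then E[Re(S)] = 0, E[Im(S)] = 0, E[Re(S)·Im(S)] = 0, and E[Re(S)²] = E[Im(S)²] = 2(a+c)h². -/
open Real

/-- The expected first and second moments of a step of the random walk on the
triangular lattice `Γ_{φ,ψ}`: the step `S` takes the complex values `±(u+ih)`,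
`±(u+v)`, `±(v-ih)` with probabilities `a`, `b`, `c` respectively, where
`u = cos φ sin ψ`, `v = sin φ cos ψ`, `h = sin φ sin ψ`. -/
theorem stmt_2 (φ ψ : ℝ) (hφ : φ ∈ Set.Ioc 0 (π/2)) (hψ : ψ ∈ Set.Ioc 0 (π/2))
    (hsum : π/2 ≤ φ + ψ) (hsum' : φ + ψ < π)
    (lam a b c u v h : ℝ)
    (hlam : lam = (1/2) * (Real.cot φ * (Real.cot φ + Real.cot ψ) + ((Real.sin ψ)⁻¹)^2)⁻¹)
    (ha : a = lam * Real.cot ψ * (Real.cot φ + Real.cot ψ))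
    (hb : b = lam * (1 - Real.cot φ * Real.cot ψ))
    (hc : c = lam * Real.cot φ * (Real.cot φ + Real.cot ψ))
    (hu : u = Real.cos φ * Real.sin ψ) (hv : v = Real.sin φ * Real.cos ψ)
    (hh : h = Real.sin φ * Real.sin ψ)
    -- the six steps of the walk, as complex numbers, with their probabilities
    (S : Fin 6 → ℂ) (p : Fin 6 → ℝ)
    (hS : S = ![u + h*Complex.I, -(u + h*Complex.I), (u+v : ℂ), -(u+v : ℂ),
                v - h*Complex.I, -(v - h*Complex.I)])
    (hp : p = ![a, a, b, b, c, c]) :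
    (∑ i, p i * (S i).re = 0) ∧ (∑ i, p i * (S i).im = 0) ∧
    (∑ i, p i * ((S i).re * (S i).im) = 0) ∧
    (∑ i, p i * (S i).re^2 = 2*(a+c)*h^2) ∧ (∑ i, p i * (S i).im^2 = 2*(a+c)*h^2) := by
  have hsφ : Real.sin φ ≠ 0 :=
    ne_of_gt (Real.sin_pos_of_pos_of_lt_pi hφ.1 (by linarith [hψ.1, hψ.2, pi_pos]))
  have hsψ : Real.sin ψ ≠ 0 :=
    ne_of_gt (Real.sin_pos_of_pos_of_lt_pi hψ.1 (by linarith [hφ.1, hφ.2, pi_pos]))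
  have key1 : a * u = c * v := by
    rw [ha, hc, hu, hv, Real.cot_eq_cos_div_sin, Real.cot_eq_cos_div_sin]
    field_simp
  have key2 : a * u^2 + b * (u+v)^2 + c * v^2 = (a+c) * h^2 := by
    rw [ha, hb, hc, hu, hv, hh, Real.cot_eq_cos_div_sin, Real.cot_eq_cos_div_sin]
    field_simp
    ring
  subst hS hp
  simp only [Fin.sum_univ_succ, Finset.univ_unique, Fin.default_eq_zero, Finset.sum_singleton,
    Matrix.cons_val_zero, Matrix.cons_val_succ, Complex.add_re, Complex.add_im, Complex.neg_re,
    Complex.neg_im, Complex.sub_re, Complex.sub_im, Complex.mul_re, Complex.mul_im,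
    Complex.ofReal_re, Complex.ofReal_im, Complex.I_re, Complex.I_im, Fin.sum_univ_zero, add_zero]
  refine ⟨by ring, by ring, by linear_combination 2*h*key1, by linear_combination 2*key2, by ring⟩
end

section
/- Let α, β ∈ (0, π) with α + β < π. Then there exist integers n_L, n_R with n_L + n_R ≥ 0 and angles φ, ψ ∈ [π/4, π/2] with π/2 ≤ φ + ψ < π such that cot α = n_L(cot φ + cot ψ) + cot φ and cot β = n_R(cot φ + cot ψ) + cot ψ. -/
/-!
Put `a = cot α` and `b = cot β`; then `a + b = sin (α + β) / (sin α sin β) > 0`. Choose a step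
`s = (a + b) / N ∈ (0, 1]` with `N = ⌈a + b⌉`, reduce `a` modulo `s` as `a = n_L s + u` with
`u ∈ [0, s)`, and set `v = s - u ∈ (0, s]`, so that `b = (N - 1 - n_L) s + v`. The lattice angles
are `φ = π/2 - arctan u` and `ψ = π/2 - arctan v`, with cotangents `u` and `v`: as `u, v ∈ [0, 1]`
they lie in `[π/4, π/2]`, and `v > 0` keeps `ψ < π/2`.
-/

open Real

lemma cot_pi_div_two_sub_arctan (x : ℝ) : cot (π / 2 - arctan x) = x := by
  rw [cot_eq_cos_div_sin, cos_pi_div_two_sub, sin_pi_div_two_sub, ← tan_eq_sin_div_cos,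
    tan_arctan]

lemma pi_div_two_sub_arctan_mem_Icc {x : ℝ} (h0 : 0 ≤ x) (h1 : x ≤ 1) :
    π / 2 - arctan x ∈ Set.Icc (π / 4) (π / 2) := by
  have hle : arctan x ≤ π / 4 := arctan_one ▸ arctan_strictMono.monotone h1
  have hnonneg : 0 ≤ arctan x := arctan_nonneg.mpr h0
  constructor <;> linarith

lemma cot_add_cot_pos {α β : ℝ} (hα : 0 < α) (hβ : 0 < β) (hαβ : α + β < π) :
    0 < cot α + cot β := by
  have hsα : 0 < sin α := sin_pos_of_pos_of_lt_pi hα (by linarith)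
  have hsβ : 0 < sin β := sin_pos_of_pos_of_lt_pi hβ (by linarith)
  have hsum : cot α + cot β = sin (α + β) / (sin α * sin β) := by
    rw [cot_eq_cos_div_sin, cot_eq_cos_div_sin, sin_add]
    field_simp
    ring
  rw [hsum]
  exact div_pos (sin_pos_of_pos_of_lt_pi (by linarith) hαβ) (mul_pos hsα hsβ)

lemma exists_int_mul_add_decomposition {a b : ℝ} (hab : 0 < a + b) :
    ∃ (nL nR : ℤ) (u v : ℝ), 0 ≤ nL + nR ∧ 0 ≤ u ∧ u ≤ 1 ∧ 0 < v ∧ v ≤ 1 ∧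
      a = nL * (u + v) + u ∧ b = nR * (u + v) + v := by
  set N : ℤ := ⌈a + b⌉
  have hN : (0 : ℝ) < N := Int.cast_pos.mpr (Int.ceil_pos.mpr hab)
  set s := (a + b) / N
  have hs : 0 < s := div_pos hab hN
  have hs1 : s ≤ 1 := (div_le_one hN).mpr (Int.le_ceil _)
  have hNs : N * s = a + b := mul_div_cancel₀ _ hN.ne'
  clear_value s
  set nL := toIcoDiv hs 0 a
  set u := toIcoMod hs 0 a
  have hu : u ∈ Set.Ico 0 s := toIcoMod_mem_Ico' hs a
  have ha : a = nL * s + u := by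
    rw [← toIcoMod_add_toIcoDiv_zsmul hs 0 a, zsmul_eq_mul]
    ring
  have hN1 : 1 ≤ N := Int.ceil_pos.mpr hab
  refine ⟨nL, N - 1 - nL, u, s - u, by omega, hu.1, by linarith [hu.2], by linarith [hu.2],
    by linarith [hu.1], ?_, ?_⟩
  · rwa [add_sub_cancel]
  · rw [add_sub_cancel]
    push_cast
    linear_combination -hNs - ha

/-- Lattice-fitting lemma: for any wedge angles `α, β ∈ (0,π)` with `α+β < π`
there are integers `n_L, n_R` with `n_L + n_R ≥ 0` and lattice angles
`φ, ψ ∈ [π/4, π/2]` with `π/2 ≤ φ+ψ < π` such that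
`cot α = n_L(cot φ + cot ψ) + cot φ` and `cot β = n_R(cot φ + cot ψ) + cot ψ`. -/
theorem stmt_3 (α β : ℝ) (hα : α ∈ Set.Ioo 0 π) (hβ : β ∈ Set.Ioo 0 π)
    (hαβ : α + β < π) :
    ∃ (nL nR : ℤ) (φ ψ : ℝ), nL + nR ≥ 0 ∧
      φ ∈ Set.Icc (π/4) (π/2) ∧ ψ ∈ Set.Icc (π/4) (π/2) ∧
      π/2 ≤ φ + ψ ∧ φ + ψ < π ∧
      Real.cot α = nL * (Real.cot φ + Real.cot ψ) + Real.cot φ ∧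
      Real.cot β = nR * (Real.cot φ + Real.cot ψ) + Real.cot ψ := by
  obtain ⟨nL, nR, u, v, hn, hu0, hu1, hv0, hv1, ha, hb⟩ :=
    exists_int_mul_add_decomposition (cot_add_cot_pos hα.1 hβ.1 hαβ)
  have hφ := pi_div_two_sub_arctan_mem_Icc hu0 hu1
  have hψ := pi_div_two_sub_arctan_mem_Icc hv0.le hv1
  have hv : 0 < arctan v := arctan_pos.mpr hv0
  refine ⟨nL, nR, π / 2 - arctan u, π / 2 - arctan v, hn, hφ, hψ, by linarith [hφ.1, hψ.1],
    by linarith [hφ.2], ?_, ?_⟩ <;>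
  rwa [cot_pi_div_two_sub_arctan, cot_pi_div_two_sub_arctan]
end

section
/- Let α, β ∈ (0, π/2) and set n_L = ⌈cot α⌉ − 1, n_R = ⌈cot β⌉ − 1. Define cot φ = ((n_R+1)·cot α − n_L·cot β)/(n_L+n_R+1) and cot ψ = ((n_L+1)·cot β − n_R·cot α)/(n_L+n_R+1). Then 0 ≤ cot φ ≤ 1 and 0 ≤ cot ψ ≤ 1, i.e., φ, ψ ∈ [π/4, π/2], and cot α = n_L(cot φ + cot ψ) + cot φ, cot β = n_R(cot φ + cot ψ) + cot ψ. -/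
open Real

lemma cot_pos_of_acute {x : ℝ} (hx : x ∈ Set.Ioo 0 (π/2)) : 0 < Real.cot x := by
  rw [Real.cot_eq_cos_div_sin]
  exact div_pos (Real.cos_pos_of_mem_Ioo ⟨by linarith [hx.1, Real.pi_pos], hx.2⟩)
    (Real.sin_pos_of_pos_of_lt_pi hx.1 (by linarith [hx.2, Real.pi_pos]))

/-- The explicit construction in the lattice-fitting lemma when both angles are
acute: with `n_L = ⌈cot α⌉ - 1`, `n_R = ⌈cot β⌉ - 1` and the given formulas for
`cot φ` and `cot ψ`, one has `cot φ, cot ψ ∈ [0,1]` (i.e. `φ, ψ ∈ [π/4, π/2]`)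
and the two fitting equations hold. -/
theorem stmt_4 (α β : ℝ) (hα : α ∈ Set.Ioo 0 (π/2)) (hβ : β ∈ Set.Ioo 0 (π/2))
    (nL nR : ℤ) (hnL : nL = ⌈Real.cot α⌉ - 1) (hnR : nR = ⌈Real.cot β⌉ - 1)
    (cotφ cotψ : ℝ)
    (hφ : cotφ = ((nR + 1) * Real.cot α - nL * Real.cot β) / (nL + nR + 1))
    (hψ : cotψ = ((nL + 1) * Real.cot β - nR * Real.cot α) / (nL + nR + 1)) :
    0 ≤ cotφ ∧ cotφ ≤ 1 ∧ 0 ≤ cotψ ∧ cotψ ≤ 1 ∧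
    Real.cot α = nL * (cotφ + cotψ) + cotφ ∧
    Real.cot β = nR * (cotφ + cotψ) + cotψ := by
  set a := Real.cot α with ha
  set b := Real.cot β with hb
  have ha0 : 0 < a := cot_pos_of_acute hα
  have hb0 : 0 < b := cot_pos_of_acute hβ
  have hnL0 : (0:ℝ) ≤ (nL:ℝ) := by
    have : (1:ℤ) ≤ ⌈a⌉ := Int.ceil_pos.mpr ha0
    have : (0:ℤ) ≤ nL := by omega
    exact_mod_cast this
  have hnR0 : (0:ℝ) ≤ (nR:ℝ) := by
    have : (1:ℤ) ≤ ⌈b⌉ := Int.ceil_pos.mpr hb0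
    have : (0:ℤ) ≤ nR := by omega
    exact_mod_cast this
  have hL1 : (nL:ℝ) < a := by
    have := Int.ceil_lt_add_one a
    rw [hnL]; push_cast; linarith
  have hL2 : a ≤ (nL:ℝ) + 1 := by
    have := Int.le_ceil a
    rw [hnL]; push_cast; linarith
  have hR1 : (nR:ℝ) < b := by
    have := Int.ceil_lt_add_one b
    rw [hnR]; push_cast; linarith
  have hR2 : b ≤ (nR:ℝ) + 1 := by
    have := Int.le_ceil b
    rw [hnR]; push_cast; linarith
  have hD : (0:ℝ) < (nL:ℝ) + (nR:ℝ) + 1 := by linarith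
  have hD' : ((nL:ℝ) + (nR:ℝ) + 1) ≠ 0 := ne_of_gt hD
  refine ⟨?_, ?_, ?_, ?_, ?_, ?_⟩
  · rw [hφ]; apply div_nonneg _ (le_of_lt hD); nlinarith
  · rw [hφ, div_le_one hD]; nlinarith
  · rw [hψ]; apply div_nonneg _ (le_of_lt hD); nlinarith
  · rw [hψ, div_le_one hD]; nlinarith
  · rw [hφ, hψ]; field_simp; ring
  · rw [hφ, hψ]; field_simp; ring
end

section
/- Let n_L ≥ 0 be an integer, and let E[Re S₁] = (1/(n_L+1))·[c(v−u) + b(u+v) − (a+c)(2n_L·u + n_L²(u+v))] and E[Im S₁] = −h(2c + 2(a+c)n_L)/(n_L+1) be the components of the expected first step from a left boundary vertex, with u = h·cot φ, v = h·cot ψ. Then E[Re S₁]/E[Im S₁] · (−1) = cot(2α), where cot α = n_L(cot φ + cot ψ) + cot φ and a, b, c are the standard lattice probabilities. Equivalently, (cot φ·[(a+c)(n_L² + 2n_L) − b + c] + cot ψ·[(a+c)n_L² − b − c]) / (2c + 2(a+c)n_L) = ([(cot φ + cot ψ)n_L + cot φ]² − 1) / (2(cot φ + cot ψ)n_L + 2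 cot φ). -/
open Real

lemma cot_nonneg_aux {θ : ℝ} (h : θ ∈ Set.Ioc 0 (π/2)) : 0 ≤ Real.cot θ := by
  rw [Real.cot_eq_cos_div_sin]
  apply div_nonneg
  · exact Real.cos_nonneg_of_mem_Icc ⟨by linarith [h.1, Real.pi_pos], h.2⟩
  · exact le_of_lt (Real.sin_pos_of_pos_of_lt_pi h.1 (by linarith [h.2, Real.pi_pos]))

/-- The reflection-angle computation at the left boundary of a generic wedge:
the cotangent of the direction of the expected first step from a left boundary
vertex equals `(cot²α - 1)/(2 cot α)` where
`cot α = n_L(cot φ + cot ψ) + cot φ`. -/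
theorem stmt_13 (φ ψ : ℝ) (hφ : φ ∈ Set.Ioc 0 (π/2)) (hψ : ψ ∈ Set.Ioc 0 (π/2))
    (hsum : π/2 ≤ φ + ψ) (hsum' : φ + ψ < π) (nL : ℕ)
    (lam a b c : ℝ)
    (hlam : lam = (1/2) * (Real.cot φ * (Real.cot φ + Real.cot ψ) + ((Real.sin ψ)⁻¹)^2)⁻¹)
    (ha : a = lam * Real.cot ψ * (Real.cot φ + Real.cot ψ))
    (hb : b = lam * (1 - Real.cot φ * Real.cot ψ))
    (hc : c = lam * Real.cot φ * (Real.cot φ + Real.cot ψ)) :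
    (Real.cot φ * ((a + c) * ((nL : ℝ)^2 + 2*nL) - b + c)
        + Real.cot ψ * ((a + c) * (nL : ℝ)^2 - b - c))
      / (2*c + 2*(a + c)*nL)
    = (((Real.cot φ + Real.cot ψ) * nL + Real.cot φ)^2 - 1)
      / (2*(Real.cot φ + Real.cot ψ)*nL + 2*Real.cot φ) := by
  set x := Real.cot φ with hx
  set y := Real.cot ψ with hy
  have hx0 : 0 ≤ x := cot_nonneg_aux hφ
  have hy0 : 0 ≤ y := cot_nonneg_aux hψ
  have hsin : 0 < Real.sin ψ :=
    Real.sin_pos_of_pos_of_lt_pi hψ.1 (by linarith [hψ.2, Real.pi_pos])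
  have hlam0 : 0 < lam := by
    rw [hlam]
    have h1 : 0 < x * (x + y) + ((Real.sin ψ)⁻¹)^2 := by
      have : 0 < ((Real.sin ψ)⁻¹)^2 := by positivity
      nlinarith
    positivity
  subst ha hb hc
  rcases eq_or_lt_of_le (by linarith : (0:ℝ) ≤ x + y) with hxy | hxy
  · -- x + y = 0, hence x = y = 0, numerator of LHS is 0 and RHS denom is 0
    have hx' : x = 0 := by linarith
    have hy' : y = 0 := by linarith
    rw [hx', hy']
    simp
  · -- x + y > 0
    have h1 : 0 ≤ (nL : ℝ) * (x + y) :=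
      mul_nonneg (Nat.cast_nonneg _) (le_of_lt hxy)
    rcases eq_or_lt_of_le (add_nonneg h1 hx0) with ht | ht
    · -- t = 0 : x = 0 and nL = 0
      have hx' : x = 0 := by linarith
      have hn : (nL : ℝ) * (x + y) = 0 := by linarith
      have hnn : (nL : ℝ) = 0 := by
        rcases mul_eq_zero.1 hn with h | h
        · exact h
        · linarith
      rw [hx', hnn]
      simp
    · -- t > 0 : both denominators nonzero
      have hd1 : 2 * (lam * x * (x + y)) +
          2 * (lam * y * (x + y) + lam * x * (x + y)) * (nL : ℝ) ≠ 0 := by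
        have : 2 * (lam * x * (x + y)) +
            2 * (lam * y * (x + y) + lam * x * (x + y)) * (nL : ℝ)
            = 2 * lam * (x + y) * ((nL : ℝ) * (x + y) + x) := by ring
        rw [this]
        exact ne_of_gt (mul_pos (mul_pos (mul_pos two_pos hlam0) hxy) ht)
      have hd2 : 2 * (x + y) * (nL : ℝ) + 2 * x ≠ 0 := by
        have : 2 * (x + y) * (nL : ℝ) + 2 * x = 2 * ((nL : ℝ) * (x + y) + x) := by ring
        rw [this]; exact ne_of_gt (mul_pos two_pos ht)
      rw [div_eq_div_iff hd1 hd2]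
      ring
end

section
/- Let α', β' ∈ (0,1) with α' + β' < 1 and a ∈ (0,1). Then (sin(β'π)/π)·a^{1−α'}·(1−a)^{1−β'}·∫₀¹ t^{1−α'−β'}(1−t)^{β'−1}(1−at)^{−1} dt = (Γ(2−α'−β')/(Γ(1−α')Γ(1−β')))·∫₀^a t^{−α'}(1−t)^{−β'} dt. -/
/-!
Both integrals are Euler integrals of the same Gauss function
`₂F₁(1-α', β'; 2-α'; a) = ₂F₁(β', 1-α'; 2-α'; a)`, whose Euler representation is obtained
by integrating the binomial series `(1 - a t)^(-c) = ∑ (c)ₙ (a t)ⁿ / n!` term by term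
against a Beta density. On the right this is visible after the scaling `t = a s`; on the
left one first applies the involution `t = (1 - s) / (1 - a s)` of `(0, 1)` (Pfaff's
substitution), which trades the factor `(1 - a t)⁻¹` for `(1 - a)^(β'-1) (1 - a s)^(α'-1)`.
Comparing the two Beta prefactors leaves `Γ(β') Γ(1-β') = π / sin(β'π)`.
-/

open Real MeasureTheory Set Interval

open scoped Nat

theorem Real.Gamma_add_nat_eq_ascPochhammer_mul {c : ℝ} (hc : 0 < c) (n : ℕ) :
    Gamma (c + n) = (ascPochhammer ℝ n).eval c * Gamma c := by
  induction n with
  | zero => simp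
  | succ n ih =>
    rw [Nat.cast_succ, ← add_assoc, Gamma_add_one (by positivity : c + n ≠ 0), ih,
      ascPochhammer_succ_eval]
    ring

theorem Ring.choose_add_nat_sub_one_eq_ascPochhammer (c : ℝ) (n : ℕ) :
    Ring.choose (c + n - 1) n = (n ! : ℝ)⁻¹ * (ascPochhammer ℝ n).eval c := by
  rw [← Ring.multichoose_eq, ← Polynomial.ascPochhammer_smeval_eq_eval,
    ← Ring.factorial_nsmul_multichoose_eq_ascPochhammer, nsmul_eq_mul, inv_mul_cancel_left₀]
  positivity

theorem ordinaryHypergeometric_comm (a b c x : ℝ) :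
    ordinaryHypergeometric a b c x = ordinaryHypergeometric b a c x := by
  rw [ordinaryHypergeometric, ordinaryHypergeometricSeries_symm, ordinaryHypergeometric]

theorem Real.mem_eball_one_of_abs_lt_one {x : ℝ} (hx : |x| < 1) :
    x ∈ Metric.eball (0:ℝ) 1 := by
  rw [Metric.mem_eball, edist_zero_right, enorm_eq_nnnorm, ENNReal.coe_lt_one_iff,
    ← NNReal.coe_lt_coe]
  simpa using hx

theorem Real.hasSum_ascPochhammer_mul_pow {c x : ℝ} (hx : |x| < 1) :
    HasSum (fun n : ℕ => (n ! : ℝ)⁻¹ * (ascPochhammer ℝ n).eval c * x ^ n)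
      ((1 - x) ^ (-c)) := by
  have h := (one_div_one_sub_rpow_hasFPowerSeriesOnBall_zero c).hasSum
    (mem_eball_one_of_abs_lt_one hx)
  simp only [FormalMultilinearSeries.ofScalars_apply_eq, zero_add, smul_eq_mul,
    Ring.choose_add_nat_sub_one_eq_ascPochhammer] at h
  rwa [one_div, ← rpow_neg (by linarith [le_abs_self x])] at h

theorem Real.summable_abs_ascPochhammer_mul_pow (c : ℝ) {x : ℝ} (hx : |x| < 1) :
    Summable (fun n : ℕ => |(n ! : ℝ)⁻¹ * (ascPochhammer ℝ n).eval c| * |x| ^ n) := by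
  have h := FormalMultilinearSeries.summable_norm_apply _
    (Metric.eball_subset_eball (one_div_one_sub_rpow_hasFPowerSeriesOnBall_zero c).r_le
      (mem_eball_one_of_abs_lt_one hx))
  simpa [FormalMultilinearSeries.ofScalars_apply_eq, Ring.choose_add_nat_sub_one_eq_ascPochhammer,
    abs_mul, mul_comm] using h

theorem hasSum_integral_mul_ascPochhammer_mul_pow {w : ℝ → ℝ}
    (hw : IntervalIntegrable w volume 0 1) (c : ℝ) {x : ℝ} (hx : |x| < 1) :
    HasSum (fun n : ℕ =>
        ∫ t in (0:ℝ)..1, w t * ((n ! : ℝ)⁻¹ * (ascPochhammer ℝ n).eval c * (x * t) ^ n))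
      (∫ t in (0:ℝ)..1, w t * (1 - x * t) ^ (-c)) := by
  have hxt : ∀ t ∈ Ι (0:ℝ) 1, |x * t| ≤ |x| := fun t ht => by
    rw [uIoc_of_le zero_le_one] at ht
    rw [abs_mul, abs_of_pos ht.1]
    exact mul_le_of_le_one_right (abs_nonneg x) ht.2
  refine intervalIntegral.hasSum_integral_of_dominated_convergence
    (fun n t => |(n ! : ℝ)⁻¹ * (ascPochhammer ℝ n).eval c| * |x| ^ n * |w t|)
    (fun n => ?_) (fun n => ?_) ?_ ?_ ?_
  · rw [uIoc_of_le zero_le_one]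
    exact hw.1.aestronglyMeasurable.mul (Continuous.aestronglyMeasurable (by fun_prop))
  · refine Filter.Eventually.of_forall fun t ht => ?_
    calc ‖w t * ((n ! : ℝ)⁻¹ * (ascPochhammer ℝ n).eval c * (x * t) ^ n)‖
        = |(n ! : ℝ)⁻¹ * (ascPochhammer ℝ n).eval c| * |x * t| ^ n * |w t| := by
          rw [Real.norm_eq_abs, abs_mul, abs_mul _ ((x * t) ^ n), abs_pow]
          ring
      _ ≤ _ := by gcongr _ * ?_ ^ n * _; exact hxt t ht
  · exact Filter.Eventually.of_forall fun t _ =>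
      (summable_abs_ascPochhammer_mul_pow c hx).mul_right |w t|
  · simp_rw [tsum_mul_right]
    exact hw.abs.const_mul _
  · exact Filter.Eventually.of_forall fun t ht =>
      (hasSum_ascPochhammer_mul_pow ((hxt t ht).trans_lt hx)).mul_left (w t)

theorem integral_rpow_mul_one_sub_rpow {u v : ℝ} (hu : 0 < u) (hv : 0 < v) :
    ∫ t in (0:ℝ)..1, t ^ (u - 1) * (1 - t) ^ (v - 1) = Gamma u * Gamma v / Gamma (u + v) := by
  have h := Complex.betaIntegral_eq_Gamma_mul_div u v (by simpa) (by simpa)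
  rw [Complex.betaIntegral, ← Complex.ofReal_add, Complex.Gamma_ofReal, Complex.Gamma_ofReal,
    Complex.Gamma_ofReal] at h
  refine Complex.ofReal_injective ?_
  push_cast
  rw [← h, ← intervalIntegral.integral_ofReal]
  refine intervalIntegral.integral_congr fun t ht => ?_
  rw [uIcc_of_le zero_le_one] at ht
  push_cast
  rw [Complex.ofReal_cpow ht.1, Complex.ofReal_cpow (sub_nonneg.2 ht.2)]
  push_cast
  ring

theorem integral_rpow_mul_one_sub_rpow_mul_pow {b c : ℝ} (hb : 0 < b) (hcb : b < c) (n : ℕ) :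
    ∫ t in (0:ℝ)..1, t ^ (b - 1) * (1 - t) ^ (c - b - 1) * t ^ n =
      Gamma b * Gamma (c - b) / Gamma c *
        ((ascPochhammer ℝ n).eval b / (ascPochhammer ℝ n).eval c) := by
  have hc : 0 < c := hb.trans hcb
  have hpow : ∀ t ∈ Ι (0:ℝ) 1, t ^ (b - 1) * (1 - t) ^ (c - b - 1) * t ^ n =
      t ^ ((b + n) - 1) * (1 - t) ^ ((c - b) - 1) := fun t ht => by
    rw [uIoc_of_le zero_le_one] at ht
    rw [mul_right_comm, ← rpow_natCast, ← rpow_add ht.1]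
    ring_nf
  rw [intervalIntegral.integral_congr_ae (Filter.Eventually.of_forall hpow),
    integral_rpow_mul_one_sub_rpow (by positivity) (sub_pos.2 hcb),
    show b + n + (c - b) = c + n by ring, Real.Gamma_add_nat_eq_ascPochhammer_mul hb,
    Real.Gamma_add_nat_eq_ascPochhammer_mul hc]
  have := (ascPochhammer_pos n c hc).ne'
  have := (Gamma_pos_of_pos hc).ne'
  field_simp

theorem integral_eq_Gamma_mul_Gamma_div_mul_ordinaryHypergeometric {a b c x : ℝ} (hb : 0 < b)
    (hcb : b < c) (hx : |x| < 1) :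
    ∫ t in (0:ℝ)..1, t ^ (b - 1) * (1 - t) ^ (c - b - 1) * (1 - x * t) ^ (-a) =
      Gamma b * Gamma (c - b) / Gamma c * ordinaryHypergeometric a b c x := by
  have hw : IntervalIntegrable (fun t : ℝ => t ^ (b - 1) * (1 - t) ^ (c - b - 1)) volume 0 1 := by
    refine intervalIntegral.intervalIntegrable_of_integral_ne_zero ?_
    rw [integral_rpow_mul_one_sub_rpow hb (sub_pos.2 hcb)]
    have := Gamma_pos_of_pos hb
    have := Gamma_pos_of_pos (sub_pos.2 hcb)
    have := Gamma_pos_of_pos (hb.trans hcb)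
    positivity
  have hterm : ∀ n : ℕ, ∫ t in (0:ℝ)..1, t ^ (b - 1) * (1 - t) ^ (c - b - 1) *
      ((n ! : ℝ)⁻¹ * (ascPochhammer ℝ n).eval a * (x * t) ^ n) =
      Gamma b * Gamma (c - b) / Gamma c * (ordinaryHypergeometricCoefficient a b c n * x ^ n) := by
    intro n
    simp_rw [show ∀ t : ℝ, t ^ (b - 1) * (1 - t) ^ (c - b - 1) *
        ((n ! : ℝ)⁻¹ * (ascPochhammer ℝ n).eval a * (x * t) ^ n) =
        (n ! : ℝ)⁻¹ * (ascPochhammer ℝ n).eval a * x ^ n *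
          (t ^ (b - 1) * (1 - t) ^ (c - b - 1) * t ^ n) from fun t => by ring]
    rw [intervalIntegral.integral_const_mul, integral_rpow_mul_one_sub_rpow_mul_pow hb hcb]
    ring
  rw [ordinaryHypergeometric, ordinaryHypergeometric_sum_eq, ← tsum_mul_left]
  exact ((funext hterm) ▸ hasSum_integral_mul_ascPochhammer_mul_pow hw a hx).tsum_eq.symm

theorem one_sub_one_sub_div_one_sub_mul {a s : ℝ} (h : 1 - a * s ≠ 0) :
    1 - (1 - s) / (1 - a * s) = s * (1 - a) / (1 - a * s) := by
  rw [eq_div_iff h, sub_mul, div_mul_cancel₀ _ h]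
  ring

theorem one_sub_mul_one_sub_div_one_sub_mul {a s : ℝ} (h : 1 - a * s ≠ 0) :
    1 - a * ((1 - s) / (1 - a * s)) = (1 - a) / (1 - a * s) := by
  rw [eq_div_iff h, sub_mul, mul_assoc, div_mul_cancel₀ _ h]
  ring

theorem one_sub_mul_pos_of_mem_Ioo {a s : ℝ} (ha : a < 1) (hs : s ∈ Ioo (0:ℝ) 1) :
    0 < 1 - a * s := by
  nlinarith [hs.1, hs.2]

theorem bijOn_one_sub_div_one_sub_mul {a : ℝ} (ha : a < 1) :
    BijOn (fun s => (1 - s) / (1 - a * s)) (Ioo 0 1) (Ioo 0 1) := by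
  have hmaps : MapsTo (fun s => (1 - s) / (1 - a * s)) (Ioo 0 1) (Ioo 0 1) := fun s hs => by
    have hD := one_sub_mul_pos_of_mem_Ioo ha hs
    refine ⟨div_pos (by linarith [hs.2]) hD, (div_lt_one hD).2 ?_⟩
    nlinarith [hs.1]
  have hinv : LeftInvOn (fun s => (1 - s) / (1 - a * s)) (fun s => (1 - s) / (1 - a * s))
      (Ioo 0 1) := fun s hs => by
    have hD := (one_sub_mul_pos_of_mem_Ioo ha hs).ne'
    simp only
    rw [one_sub_one_sub_div_one_sub_mul hD, one_sub_mul_one_sub_div_one_sub_mul hD,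
      div_div_div_cancel_right₀ hD, mul_div_assoc, div_self (sub_pos.2 ha).ne', mul_one]
  exact InvOn.bijOn ⟨hinv, hinv⟩ hmaps hmaps

theorem integral_comp_one_sub_div_one_sub_mul {a : ℝ} (ha : a < 1) (p q r : ℝ) :
    ∫ t in (0:ℝ)..1, t ^ p * (1 - t) ^ q * (1 - a * t) ^ r =
      (1 - a) ^ (q + r + 1) *
        ∫ s in (0:ℝ)..1, s ^ q * (1 - s) ^ p * (1 - a * s) ^ (-(p + q + r + 2)) := by
  have h1a : 0 < 1 - a := sub_pos.2 ha
  have hbij := bijOn_one_sub_div_one_sub_mul ha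
  have hderiv : ∀ s ∈ Ioo (0:ℝ) 1, HasDerivWithinAt (fun s => (1 - s) / (1 - a * s))
      ((a - 1) / (1 - a * s) ^ 2) (Ioo 0 1) s := fun s hs => by
    have := ((hasDerivAt_id' s).const_sub 1).div (((hasDerivAt_id' s).const_mul a).const_sub 1)
      (one_sub_mul_pos_of_mem_Ioo ha hs).ne'
    exact this.hasDerivWithinAt.congr_deriv (by ring)
  rw [intervalIntegral.integral_of_le zero_le_one, intervalIntegral.integral_of_le zero_le_one,
    integral_Ioc_eq_integral_Ioo, integral_Ioc_eq_integral_Ioo, ← integral_const_mul]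
  conv_lhs => rw [← hbij.image_eq]
  rw [integral_image_eq_integral_abs_deriv_smul measurableSet_Ioo hderiv hbij.injOn]
  refine setIntegral_congr_fun measurableSet_Ioo fun s hs => ?_
  have hD := one_sub_mul_pos_of_mem_Ioo ha hs
  have hs1 : 0 ≤ 1 - s := by linarith [hs.2]
  rw [smul_eq_mul, one_sub_one_sub_div_one_sub_mul hD.ne',
    one_sub_mul_one_sub_div_one_sub_mul hD.ne', abs_div, abs_of_neg (by linarith),
    abs_of_pos (by positivity), div_rpow hs1 hD.le, div_rpow (mul_nonneg hs.1.le h1a.le) hD.le,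
    div_rpow h1a.le hD.le, mul_rpow hs.1.le h1a.le, rpow_neg hD.le,
    show p + q + r + 2 = p + q + r + (2 : ℕ) by norm_num, rpow_add hD, rpow_add hD, rpow_add hD,
    rpow_natCast, rpow_add h1a, rpow_add h1a, rpow_one]
  field_simp
  ring

theorem integral_zero_to_rpow_mul {a : ℝ} (ha : 0 < a) (p : ℝ) (g : ℝ → ℝ) :
    ∫ t in (0:ℝ)..a, t ^ p * g t = a ^ (p + 1) * ∫ s in (0:ℝ)..1, s ^ p * g (a * s) := by
  have h := intervalIntegral.integral_comp_mul_left (fun t => t ^ p * g t) ha.ne'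
    (a := 0) (b := 1)
  rw [mul_zero, mul_one, smul_eq_mul] at h
  have hpt : ∀ s ∈ [[(0:ℝ), 1]], (a * s) ^ p * g (a * s) = a ^ p * (s ^ p * g (a * s)) :=
    fun s hs => by
      rw [uIcc_of_le zero_le_one] at hs
      rw [mul_rpow ha.le hs.1, mul_assoc]
  rw [intervalIntegral.integral_congr hpt, intervalIntegral.integral_const_mul] at h
  rw [rpow_add_one ha.ne', mul_right_comm, h]
  field_simp

theorem integral_rpow_mul_one_sub_rpow_mul_one_sub_mul_rpow {p q x : ℝ} (hp : -1 < p)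
    (hq : -1 < q) (hx : |x| < 1) (r : ℝ) :
    ∫ t in (0:ℝ)..1, t ^ p * (1 - t) ^ q * (1 - x * t) ^ r =
      (1 - x) ^ (q + r + 1) * (Gamma (q + 1) * Gamma (p + 1) / Gamma (p + q + 2) *
        ordinaryHypergeometric (p + q + r + 2) (q + 1) (p + q + 2) x) := by
  have h := integral_eq_Gamma_mul_Gamma_div_mul_ordinaryHypergeometric (a := p + q + r + 2)
    (b := q + 1) (c := p + q + 2) (by linarith) (by linarith) hx
  rw [show q + 1 - 1 = q by ring, show p + q + 2 - (q + 1) - 1 = p by ring,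
    show p + q + 2 - (q + 1) = p + 1 by ring] at h
  rw [integral_comp_one_sub_div_one_sub_mul (abs_lt.1 hx).2, h]

theorem integral_zero_to_rpow_mul_one_sub_rpow {p x : ℝ} (hp : -1 < p) (hx : x ∈ Ioo (0:ℝ) 1)
    (q : ℝ) :
    ∫ t in (0:ℝ)..x, t ^ p * (1 - t) ^ q =
      x ^ (p + 1) / (p + 1) * ordinaryHypergeometric (-q) (p + 1) (p + 2) x := by
  have h := integral_eq_Gamma_mul_Gamma_div_mul_ordinaryHypergeometric (a := -q)
    (b := p + 1) (c := p + 2) (by linarith) (by linarith) (by rw [abs_of_pos hx.1]; exact hx.2)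
  have hΓ : Gamma (p + 2) = (p + 1) * Gamma (p + 1) := by
    rw [show p + 2 = p + 1 + 1 by ring, Gamma_add_one (by linarith)]
  rw [show p + 1 - 1 = p by ring, show p + 2 - (p + 1) = 1 by ring, neg_neg, Gamma_one, mul_one,
    hΓ] at h
  simp only [sub_self, rpow_zero, mul_one] at h
  have := (Gamma_pos_of_pos (by linarith : 0 < p + 1)).ne'
  rw [integral_zero_to_rpow_mul hx.1, h]
  field_simp

theorem stmt_17_general (α' β' a : ℝ) (hα : α' ∈ Set.Ioo (0:ℝ) 1) (hβ : β' ∈ Set.Ioo (0:ℝ) 1)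
    (ha : a ∈ Set.Ioo (0:ℝ) 1) :
    (Real.sin (β' * π) / π) * a ^ (1 - α') * (1 - a) ^ (1 - β') *
        ∫ t in (0:ℝ)..1, t ^ (1 - α' - β') * (1 - t) ^ (β' - 1) * (1 - a*t)⁻¹
      = (Real.Gamma (2 - α' - β') / (Real.Gamma (1 - α') * Real.Gamma (1 - β'))) *
        ∫ t in (0:ℝ)..a, t ^ (-α') * (1 - t) ^ (-β') := by
  obtain ⟨-, hα1⟩ := hα
  obtain ⟨hβ0, hβ1⟩ := hβ
  have hK := integral_rpow_mul_one_sub_rpow_mul_one_sub_mul_rpow (p := 1 - α' - β') (q := β' - 1)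
    (by linarith) (by linarith) (by rw [abs_of_pos ha.1]; exact ha.2) (-1)
  rw [show β' - 1 + -1 + 1 = -(1 - β') by ring, rpow_neg (by linarith [ha.2]),
    show β' - 1 + 1 = β' by ring, show 1 - α' - β' + 1 = 2 - α' - β' by ring,
    show 1 - α' - β' + (β' - 1) + 2 = 2 - α' by ring,
    show 1 - α' - β' + (β' - 1) + -1 + 2 = 1 - α' by ring] at hK
  have hJ := integral_zero_to_rpow_mul_one_sub_rpow (p := -α') (by linarith) ha (-β')
  rw [neg_add_eq_sub, neg_neg, show -α' + 2 = 2 - α' by ring] at hJ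
  have hsin : sin (β' * π) = π / (Gamma β' * Gamma (1 - β')) := by
    rw [Gamma_mul_Gamma_one_sub, mul_comm π, div_div_cancel₀ pi_ne_zero]
  have hΓ : Gamma (2 - α') = (1 - α') * Gamma (1 - α') := by
    rw [show 2 - α' = 1 - α' + 1 by ring, Gamma_add_one (by linarith)]
  have := Gamma_pos_of_pos hβ0
  have := Gamma_pos_of_pos (sub_pos.2 hβ1)
  have := Gamma_pos_of_pos (sub_pos.2 hα1)
  have : 0 < (1 - a) ^ (1 - β') := rpow_pos_of_pos (by linarith [ha.2]) _
  simp_rw [← rpow_neg_one (1 - a * _)]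
  rw [hK, hJ, ordinaryHypergeometric_comm, hsin, hΓ]
  field_simp

/-- The hypergeometric identity behind the last-visit distribution: for
`α', β' ∈ (0,1)` with `α' + β' < 1` and `a ∈ (0,1)`,
`(sin(β'π)/π)·a^{1-α'}(1-a)^{1-β'} ∫₀¹ t^{1-α'-β'}(1-t)^{β'-1}(1-at)⁻¹ dt
  = (Γ(2-α'-β')/(Γ(1-α')Γ(1-β'))) ∫₀^a t^{-α'}(1-t)^{-β'} dt`. -/
theorem stmt_17 (α' β' a : ℝ) (hα : α' ∈ Set.Ioo (0:ℝ) 1) (hβ : β' ∈ Set.Ioo (0:ℝ) 1)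
    (hαβ : α' + β' < 1) (ha : a ∈ Set.Ioo (0:ℝ) 1) :
    (Real.sin (β' * π) / π) * a ^ (1 - α') * (1 - a) ^ (1 - β') *
        ∫ t in (0:ℝ)..1, t ^ (1 - α' - β') * (1 - t) ^ (β' - 1) * (1 - a*t)⁻¹
      = (Real.Gamma (2 - α' - β') / (Real.Gamma (1 - α') * Real.Gamma (1 - β'))) *
        ∫ t in (0:ℝ)..a, t ^ (-α') * (1 - t) ^ (-β') :=
  stmt_17_general α' β' a hα hβ ha
end
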